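/- arXiv:1209.2220 — 12 statements merged into one kernel-verified Lean document; each statement's English description precedes it below -/
import Mathlib

section
/- Let A be an integral domain. Then A is absolutely integrally closed if and only if A has no proper integral ring extension which is an integral domain (equivalently: every injective integral ring map from A into an integral domain is surjective). -/
/-- An integral domain `A` is *absolutely integrally closed* if it is integrally closed in its
fraction field and the fraction field is algebraically closed; equivalently (for domains),
every monic polynomial of positive degree over `A` has a root in `A`
(and hence splits into linear factors). -/
def AbsolutelyIntegrallyClosed (A : Type*) [CommRing A] : Prop :=
  ∀ p : Polynomial A, p.Monic → 0 < p.natDegree → ∃ x : A, p.IsRoot x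

/-!
If every monic polynomial over `A` has a root in `A`, then by peeling off linear factors every
monic polynomial splits over `A`. An element `d` integral over `A` is a root of the image of such
a polynomial, and in a domain the roots of `∏ (X - φ aᵢ)` are the `φ aᵢ`, so `d` lies in the image.
Conversely, a root `α` of a monic `p` in the algebraic closure of the fraction field generates an
integral extension `A[α]`; surjectivity of `A → A[α]` puts `α` in `A`.
-/

open Polynomial

theorem AbsolutelyIntegrallyClosed.splits_of_monic {A : Type*} [CommRing A]
    (h : AbsolutelyIntegrallyClosed A) {p : A[X]} (hp : p.Monic) : p.Splits := by
  induction hn : p.natDegree using Nat.strong_induction_on generalizing p with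
  | _ n ih =>
    rcases Nat.eq_zero_or_pos n with rfl | hpos
    · exact Splits.of_natDegree_eq_zero hn
    have : Nontrivial A := Nontrivial.of_polynomial_ne (ne_zero_of_natDegree_gt (hn ▸ hpos))
    obtain ⟨x, hx⟩ := h p hp (hn ▸ hpos)
    obtain ⟨q, rfl⟩ := dvd_iff_isRoot.mpr hx
    have hq : q.Monic := (monic_X_sub_C x).of_mul_monic_left hp
    have hdeg : q.natDegree + 1 = n := by
      rw [← hn, (monic_X_sub_C x).natDegree_mul hq, natDegree_X_sub_C, add_comm]
    exact (Splits.X_sub_C x).mul (ih q.natDegree (by omega) hq rfl)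

theorem AbsolutelyIntegrallyClosed.surjective_of_isIntegral {A D : Type*} [CommRing A] [IsDomain A]
    [CommRing D] [IsDomain D] (h : AbsolutelyIntegrallyClosed A) (φ : A →+* D)
    (hφ : φ.IsIntegral) : Function.Surjective φ := by
  intro d
  obtain ⟨p, hp, hd⟩ := hφ d
  have hne : p.map φ ≠ 0 := (hp.map φ).ne_zero
  rw [eval₂_eq_eval_map, ← IsRoot, ← mem_roots hne,
    (h.splits_of_monic hp).roots_map_of_ne_zero hne, Multiset.mem_map] at hd
  obtain ⟨a, -, rfl⟩ := hd
  exact ⟨a, rfl⟩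

theorem exists_algebraMap_eq_of_isIntegral {A K : Type u} [CommRing A] [CommRing K] [IsDomain K]
    [Algebra A K] (hinj : Function.Injective (algebraMap A K))
    (h : ∀ (D : Type u) [CommRing D] [IsDomain D] (φ : A →+* D),
      Function.Injective φ → φ.IsIntegral → Function.Surjective φ)
    {x : K} (hx : IsIntegral A x) : ∃ a : A, algebraMap A K a = x := by
  let D := Algebra.adjoin A {x}
  have hDint : Algebra.IsIntegral A D := Algebra.IsIntegral.adjoin (by simpa using hx)
  have hDinj : Function.Injective (algebraMap A D) := fun a b hab =>
    hinj (congrArg Subtype.val hab)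
  obtain ⟨a, ha⟩ := h D (algebraMap A D) hDinj (fun y => Algebra.IsIntegral.isIntegral y)
    ⟨x, Algebra.subset_adjoin rfl⟩
  exact ⟨a, congrArg Subtype.val ha⟩

/-- An integral domain `A` is absolutely integrally closed if and only if every injective
integral ring map from `A` into an integral domain is surjective (i.e. `A` has no proper
integral extension which is a domain). -/
theorem absolutelyIntegrallyClosed_iff_no_proper_integral_extension
    {A : Type u} [CommRing A] [IsDomain A] :
    AbsolutelyIntegrallyClosed A ↔
      ∀ (D : Type u) [CommRing D] [IsDomain D] (φ : A →+* D),
        Function.Injective φ → φ.IsIntegral → Function.Surjective φ := by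
  refine ⟨fun h D _ _ φ _ hφ => h.surjective_of_isIntegral φ hφ, fun h p hp hdeg => ?_⟩
  let K := AlgebraicClosure (FractionRing A)
  have hinj : Function.Injective (algebraMap A K) := by
    rw [IsScalarTower.algebraMap_eq A (FractionRing A) K]
    exact (algebraMap (FractionRing A) K).injective.comp (IsFractionRing.injective A _)
  obtain ⟨α, hα⟩ := IsAlgClosed.exists_aeval_eq_zero_of_injective K hinj p
    (natDegree_pos_iff_degree_pos.mp hdeg).ne'
  obtain ⟨a, rfl⟩ := exists_algebraMap_eq_of_isIntegral hinj h ⟨p, hp, hα⟩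
  exact ⟨a, (isRoot_map_iff hinj).mp (by rwa [IsRoot, eval_map_algebraMap])⟩
end

section
/- Let A be an absolutely integrally closed integral domain, D an integral domain, and φ : A → D an integral ring homomorphism. Then φ is surjective, and D is an absolutely integrally closed domain. -/
/-!
Over `A` every monic polynomial splits into linear factors `X - C a`. If a monic `p` kills
`d ∈ D`, then `d` is a root of `p.map φ = ∏ (X - C (φ a))`, so `d = φ a` for some `a`, because
`D` is a domain. Once `φ` is surjective, a monic polynomial over `D` lifts to a monic one of the
same degree over `A`, whose root in `A` maps to a root in `D`.
-/

open Polynomial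

theorem Polynomial.Splits.mem_range_of_isRoot_of_map_ne_zero {A D : Type*} [CommRing A]
    [IsDomain A] [CommRing D] [IsDomain D] {p : A[X]} (hp : p.Splits) {φ : A →+* D}
    (hφp : p.map φ ≠ 0) {x : D} (hx : (p.map φ).IsRoot x) : x ∈ φ.range := by
  rw [← mem_roots hφp, hp.roots_map_of_ne_zero hφp, Multiset.mem_map] at hx
  obtain ⟨a, -, rfl⟩ := hx
  exact ⟨a, rfl⟩

namespace AbsolutelyIntegrallyClosed

variable {A D : Type*} [CommRing A] [CommRing D]

theorem splits_of_monic_s1 (hA : AbsolutelyIntegrallyClosed A) {p : A[X]} (hp : p.Monic) :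
    p.Splits := by
  nontriviality A using Splits.of_natDegree_eq_zero, natDegree_of_subsingleton
  induction hn : p.natDegree generalizing p with
  | zero => exact .of_natDegree_eq_zero hn
  | succ n ih =>
    obtain ⟨a, ha⟩ := hA p hp (by omega)
    rw [← mul_divByMonic_eq_iff_isRoot.mpr ha] at hp hn ⊢
    have hq : (p /ₘ (X - C a)).Monic := (monic_X_sub_C a).of_mul_monic_left hp
    refine (Splits.X_sub_C a).mul (ih hq ?_)
    rw [(monic_X_sub_C a).natDegree_mul hq, natDegree_X_sub_C] at hn
    omega

theorem surjective_of_isIntegral_s1 [IsDomain A] [IsDomain D] (hA : AbsolutelyIntegrallyClosed A)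
    (φ : A →+* D) (hφ : φ.IsIntegral) : Function.Surjective φ := fun d => by
  obtain ⟨p, hp, hd⟩ := hφ d
  exact (hA.splits_of_monic_s1 hp).mem_range_of_isRoot_of_map_ne_zero (hp.map φ).ne_zero
    (by rwa [IsRoot, eval_map])

theorem of_surjective [Nontrivial D] (hA : AbsolutelyIntegrallyClosed A) (φ : A →+* D)
    (hφ : Function.Surjective φ) : AbsolutelyIntegrallyClosed D := by
  intro p hp hdeg
  obtain ⟨q, rfl, hqdeg, hq⟩ := lifts_and_degree_eq_and_monic (map_surjective φ hφ p) hp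
  obtain ⟨a, ha⟩ := hA q hq (by rwa [natDegree_eq_of_degree_eq hqdeg])
  exact ⟨φ a, by rw [IsRoot, eval_map, eval₂_hom, ha, map_zero]⟩

end AbsolutelyIntegrallyClosed

/-- If `A` is an absolutely integrally closed domain, `D` is a domain and `φ : A → D` is an
integral ring homomorphism, then `φ` is surjective and `D` is absolutely integrally closed. -/
theorem surjective_and_absolutelyIntegrallyClosed_of_isIntegral
    {A D : Type*} [CommRing A] [IsDomain A] [CommRing D] [IsDomain D]
    (hA : AbsolutelyIntegrallyClosed A) (φ : A →+* D) (hφ : φ.IsIntegral) :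
    Function.Surjective φ ∧ AbsolutelyIntegrallyClosed D :=
  have hsurj := hA.surjective_of_isIntegral_s1 φ hφ
  ⟨hsurj, hA.of_surjective φ hsurj⟩
end

section
/- Let A be an integral domain and let f₁, …, f_n ∈ A generate the unit ideal, (f₁, …, f_n) = A. If for every i the localization A_{f_i} is an absolutely integrally closed domain, then A is an absolutely integrally closed domain. -/
open Polynomial

namespace AbsolutelyIntegrallyClosed

variable {A B L : Type*} [CommRing A] [CommRing B] [CommRing L]

lemma of_ringEquiv (e : B ≃+* L) (hB : AbsolutelyIntegrallyClosed B) :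
    AbsolutelyIntegrallyClosed L := by
  intro p hp hdeg
  obtain ⟨y, hy⟩ := hB _ (hp.map (e.symm : L →+* B))
    (by rwa [natDegree_map_eq_of_injective e.symm.injective])
  exact ⟨e y, by simpa [map_map] using hy.map (f := (e : B →+* L))⟩

lemma exists_aeval_eq_zero [Algebra A B] [Algebra B L] [Algebra A L] [IsScalarTower A B L]
    [Nontrivial B] (hB : AbsolutelyIntegrallyClosed B) {p : A[X]} (hp : p.Monic)
    (hdeg : 0 < p.natDegree) :
    ∃ x : L, aeval x p = 0 := by
  obtain ⟨y, hy⟩ := hB _ (hp.map (algebraMap A B)) (by rwa [hp.natDegree_map])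
  refine ⟨algebraMap B L y, ?_⟩
  rw [aeval_algebraMap_apply, aeval_def, ← eval_map, hy.eq_zero, map_zero]

variable [IsDomain B]

lemma splits (hB : AbsolutelyIntegrallyClosed B) {p : B[X]} (hp : p.Monic) : p.Splits := by
  induction h : p.natDegree generalizing p with
  | zero => exact .of_natDegree_eq_zero h
  | succ d ih =>
    obtain ⟨x, hx⟩ := hB p hp (by omega)
    rw [← mul_divByMonic_eq_iff_isRoot.mpr hx] at hp h ⊢
    have hq : (p /ₘ (X - C x)).Monic := (monic_X_sub_C x).of_mul_monic_left hp
    rw [natDegree_mul (X_sub_C_ne_zero x) hq.ne_zero, natDegree_X_sub_C] at h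
    exact splits_X_sub_C_mul_iff.mpr (ih hq (by omega))

lemma mem_range_of_isIntegral [IsDomain L] [Algebra B L] (hB : AbsolutelyIntegrallyClosed B)
    (hinj : Function.Injective (algebraMap B L)) {x : L} (hx : IsIntegral B x) :
    x ∈ Set.range (algebraMap B L) := by
  obtain ⟨p, hp, hpx⟩ := hx
  have hx : x ∈ (p.map (algebraMap B L)).roots := by
    rw [mem_roots (hp.map _).ne_zero, IsRoot, eval_map, hpx]
  rw [(hB.splits hp).roots_map_of_injective hinj, Multiset.mem_map] at hx
  obtain ⟨y, -, rfl⟩ := hx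
  exact ⟨y, rfl⟩

lemma exists_pow_smul_mem_range [IsDomain L] [Algebra A B] [Algebra B L] [Algebra A L]
    [IsScalarTower A B L] (r : A) [IsLocalization.Away r B] (hB : AbsolutelyIntegrallyClosed B)
    (hinj : Function.Injective (algebraMap B L)) {x : L} (hx : IsIntegral A x) :
    ∃ n : ℕ, r ^ n • x ∈ Set.range (algebraMap A L) := by
  obtain ⟨y, rfl⟩ := hB.mem_range_of_isIntegral hinj hx.tower_top
  obtain ⟨n, a, hy⟩ := IsLocalization.Away.surj r y
  refine ⟨n, a, ?_⟩
  rw [Algebra.smul_def, IsScalarTower.algebraMap_apply A B L, IsScalarTower.algebraMap_apply A B L,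
    ← hy, map_pow, ← map_mul, mul_comm]

-- Realizing `A_r` inside `K` lets all the localizations share the fraction field `K`.
lemma localizationSubalgebra {A : Type*} (K : Type*) [CommRing A]
    [IsDomain A] [Field K] [Algebra A K] [IsFractionRing A K] {r : A} (hr : r ≠ 0)
    (h : AbsolutelyIntegrallyClosed (Localization.Away r)) :
    AbsolutelyIntegrallyClosed (Localization.subalgebra K (Submonoid.powers r)
      (powers_le_nonZeroDivisors_of_noZeroDivisors hr)) :=
  h.of_ringEquiv (IsLocalization.algEquiv (Submonoid.powers r) _ _).toRingEquiv

end AbsolutelyIntegrallyClosed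

/-- If `A` is a domain, `f₁, …, f_n ∈ A` generate the unit ideal and each localization
`A_{f i}` is absolutely integrally closed, then `A` is absolutely integrally closed. -/
theorem absolutelyIntegrallyClosed_of_cover {A : Type*} [CommRing A] [IsDomain A]
    {n : ℕ} (f : Fin n → A) (hf : Ideal.span (Set.range f) = ⊤)
    (h : ∀ i, AbsolutelyIntegrallyClosed (Localization.Away (f i))) :
    AbsolutelyIntegrallyClosed A := by
  intro p hp hdeg
  let K := FractionRing A
  obtain ⟨i₀, hi₀⟩ : ∃ i, f i ≠ 0 := by
    by_contra! hf0
    exact top_ne_bot (hf ▸ Ideal.span_eq_bot.mpr (by rintro _ ⟨i, rfl⟩; exact hf0 i))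
  obtain ⟨α, hα⟩ :=
    ((h i₀).localizationSubalgebra K hi₀).exists_aeval_eq_zero (L := K) hp hdeg
  have hα_int : IsIntegral A α := ⟨p, hp, by rwa [← aeval_def]⟩
  obtain ⟨a, rfl⟩ : ∃ a, algebraMap A K a = α := by
    refine Submodule.mem_one.mp (Submodule.mem_of_span_eq_top_of_smul_pow_mem _ _ hf α ?_)
    rintro ⟨_, i, rfl⟩
    by_cases hi : f i = 0
    · exact ⟨1, by simp [hi]⟩
    · obtain ⟨m, hm⟩ := ((h i).localizationSubalgebra K hi).exists_pow_smul_mem_range (f i)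
        Subtype.val_injective hα_int
      exact ⟨m, Submodule.mem_one.mpr hm⟩
  exact ⟨a, IsFractionRing.injective A K (by simpa [aeval_algebraMap_apply] using hα)⟩
end

section
/- Let R be a quadratically closed ring and let p₁, p₂ ⊆ R be prime ideals (not necessarily distinct). Then either p₁ + p₂ = R, or p₁ + p₂ is a prime ideal. -/
/-!
Let `a * b = u + v` with `u ∈ p₁` and `v ∈ p₂`. A root `r` of `X² - (a + b) X + u` gives
`r * (a + b - r) = u ∈ p₁` and `(r - a) * (r - b) = v ∈ p₂`, so by primality one factor of each
product lies in the respective ideal, and `a` or `b` is a sum or difference of these two factors.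
-/

def QuadraticallyClosed (R : Type*) [CommRing R] : Prop :=
  ∀ p : Polynomial R, p.Monic → p.natDegree = 2 → ∃ x : R, p.IsRoot x

open Polynomial

namespace QuadraticallyClosed

variable {R : Type*} [CommRing R]

theorem exists_mul_sub_eq (hR : QuadraticallyClosed R) (s t : R) : ∃ r : R, r * (s - r) = t := by
  rcases subsingleton_or_nontrivial R with _ | _
  · exact ⟨0, Subsingleton.elim _ _⟩
  obtain ⟨r, hr⟩ := hR (X ^ 2 - C s * X + C t) (by monicity!) (by compute_degree!)
  refine ⟨r, ?_⟩
  simp only [IsRoot, eval_add, eval_sub, eval_pow, eval_mul, eval_C, eval_X] at hr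
  linear_combination -hr

theorem mem_or_mem_of_mul_mem_sup (hR : QuadraticallyClosed R) {p₁ p₂ : Ideal R}
    (h₁ : p₁.IsPrime) (h₂ : p₂.IsPrime) {a b : R} (hab : a * b ∈ p₁ ⊔ p₂) :
    a ∈ p₁ ⊔ p₂ ∨ b ∈ p₁ ⊔ p₂ := by
  obtain ⟨u, hu, v, hv, huv⟩ := Submodule.mem_sup.mp hab
  obtain ⟨r, hr⟩ := hR.exists_mul_sub_eq (a + b) u
  have hr₁ : r * (a + b - r) ∈ p₁ := hr ▸ hu
  have hr₂ : (r - a) * (r - b) ∈ p₂ := by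
    convert hv using 1
    linear_combination -hr - huv
  rcases h₁.mem_or_mem hr₁ with hr₁ | hr₁ <;> rcases h₂.mem_or_mem hr₂ with hr₂ | hr₂
  · exact .inl (by simpa using Submodule.sub_mem_sup hr₁ hr₂)
  · exact .inr (by simpa using Submodule.sub_mem_sup hr₁ hr₂)
  · exact .inr (by simpa using Submodule.add_mem_sup hr₁ hr₂)
  · exact .inl (by simpa using Submodule.add_mem_sup hr₁ hr₂)

end QuadraticallyClosed

/-- In a quadratically closed ring, the sum of two prime ideals is either the whole ring
or a prime ideal. -/
theorem sum_primes_eq_top_or_isPrime_of_quadraticallyClosed {R : Type*} [CommRing R]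
    (hR : QuadraticallyClosed R) (p₁ p₂ : Ideal R) (h₁ : p₁.IsPrime) (h₂ : p₂.IsPrime) :
    p₁ + p₂ = ⊤ ∨ (p₁ + p₂).IsPrime := by
  refine or_iff_not_imp_left.mpr fun htop => Ideal.isPrime_iff.mpr ⟨htop, ?_⟩
  exact hR.mem_or_mem_of_mul_mem_sup h₁ h₂
end

section
/- Let n be a positive natural number and let R be a 2n-adically closed ring. If p and q are prime ideals of R, then either p + q = R, or p + q is a prime ideal. -/
/-- A ring `R` is *`n`-adically closed* if every monic polynomial of degree `n` with
coefficients in `R` has a root in `R`. -/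
def AdicallyClosed (n : ℕ) (R : Type*) [CommRing R] : Prop :=
  ∀ p : Polynomial R, p.Monic → p.natDegree = n → ∃ x : R, p.IsRoot x

/-!
Write `x * y = a + b` with `a ∈ p`, `b ∈ q`, and let `g = X² - (x + y) X + b`. Since `g ^ n` is
monic of degree `2n`, some `r` has `g(r)` nilpotent, so `g(r)` lies in both primes. Modulo `p`,
`g ≡ (X - x)(X - y)`, and modulo `q`, `g ≡ X (X - (x + y))`; hence modulo `p + q` the element `r`
is congruent to `x` or `y` and also to `0` or `x + y`, which forces `x` or `y` into `p + q`.
-/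

open Polynomial

theorem AdicallyClosed.exists_isNilpotent_eval {R : Type*} [CommRing R] {d n : ℕ}
    (hR : AdicallyClosed (d * n) R) {f : R[X]} (hf : f.Monic) (hd : f.natDegree = d) :
    ∃ r : R, IsNilpotent (f.eval r) := by
  obtain ⟨r, hr⟩ := hR (f ^ n) (hf.pow n) (by rw [hf.natDegree_pow, hd, mul_comm])
  exact ⟨r, n, by rwa [IsRoot, eval_pow] at hr⟩

namespace Ideal

variable {R : Type*} [CommRing R]

theorem IsPrime.mk_eq_or_mk_eq_of_mul_sub_mem {p I : Ideal R} (hp : p.IsPrime) (hpI : p ≤ I)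
    {r x y : R} (h : (r - x) * (r - y) ∈ p) :
    Quotient.mk I r = Quotient.mk I x ∨ Quotient.mk I r = Quotient.mk I y :=
  (hp.mem_or_mem h).imp (fun h ↦ Quotient.eq.mpr (hpI h)) (fun h ↦ Quotient.eq.mpr (hpI h))

theorem mem_sup_or_mem_sup_of_quadratic_mem {p q : Ideal R} (hp : p.IsPrime) (hq : q.IsPrime)
    {x y a b r : R} (ha : a ∈ p) (hb : b ∈ q) (hab : x * y = a + b)
    (hrp : r ^ 2 - (x + y) * r + b ∈ p) (hrq : r ^ 2 - (x + y) * r + b ∈ q) :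
    x ∈ p ⊔ q ∨ y ∈ p ⊔ q := by
  have hmodp : (r - x) * (r - y) ∈ p := by
    convert p.add_mem hrp ha using 1
    linear_combination hab
  have hmodq : (r - 0) * (r - (x + y)) ∈ q := by
    convert q.sub_mem hrq hb using 1
    ring
  simp only [← Quotient.eq_zero_iff_mem (I := p ⊔ q)]
  have hr_mod_p := hp.mk_eq_or_mk_eq_of_mul_sub_mem (le_sup_left (b := q)) hmodp
  have hr_mod_q := hq.mk_eq_or_mk_eq_of_mul_sub_mem (le_sup_right (a := p)) hmodq
  grind

end Ideal

theorem sum_primes_eq_top_or_isPrime_of_adicallyClosed_general {R : Type*} [CommRing R] (n : ℕ)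
    (hR : AdicallyClosed (2 * n) R) (p q : Ideal R) (hp : p.IsPrime)
    (hq : q.IsPrime) : p + q = ⊤ ∨ (p + q).IsPrime := by
  rw [or_iff_not_imp_left]
  refine fun htop ↦ ⟨htop, fun {x y} hxy ↦ ?_⟩
  obtain ⟨a, ha, b, hb, hab⟩ := Submodule.mem_sup.mp hxy
  nontriviality R
  have hg : (X ^ 2 - C (x + y) * X + C b : R[X]).Monic := by monicity!
  obtain ⟨r, hr⟩ := hR.exists_isNilpotent_eval hg (by compute_degree!)
  rw [show eval r (X ^ 2 - C (x + y) * X + C b) = r ^ 2 - (x + y) * r + b by simp] at hr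
  exact Ideal.mem_sup_or_mem_sup_of_quadratic_mem hp hq ha hb hab.symm
    (nilradical_le_prime p hr) (nilradical_le_prime q hr)

/-- In a `2n`-adically closed ring (`n ≥ 1`), the sum of two prime ideals is either the
whole ring or a prime ideal. -/
theorem sum_primes_eq_top_or_isPrime_of_adicallyClosed {R : Type*} [CommRing R] (n : ℕ)
    (hn : 0 < n) (hR : AdicallyClosed (2 * n) R) (p q : Ideal R) (hp : p.IsPrime)
    (hq : q.IsPrime) : p + q = ⊤ ∨ (p + q).IsPrime :=
  sum_primes_eq_top_or_isPrime_of_adicallyClosed_general n hR p q hp hq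
end

section
/- Let n > 1 and let R be an n-adically closed ring. Assume that for every prime ideal p ⊆ R and all a, b ∈ R with a ∉ p and b ∈ p, the polynomial T^n + a·T^{n−1} + b ∈ R[T] has a root α ∈ R with α ∉ p. Then for any two prime ideals P, Q of R, either P + Q = R or P + Q is a prime ideal. -/
/-!
Write `n = m + 1` and `f_a(t) = (a - t) ^ m * t`. The root hypothesis at `Q` gives `f_a(Q) ⊇ Q`
whenever `a ∉ Q`; if `P ⊄ Q`, any `a` can be moved into `Q`'s complement
modulo `P`, so `f_a(Q) + P ⊇ Q` for every `a`. Given `g ^ m * y = u + v ∈ P + Q`, put `a = g + y`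
and pick `e ∈ Q` with `f_a(e) ≡ v ≡ f_a(y) (mod P)`. Factoring `f_a(e) - f_a(y)` through `e - y`
and using that `P` is prime gives `y ∈ P + Q` or `g ^ m ∈ P + Q`. This weak primality with respect
to `m`-th powers, together with the existence of `n`-th roots, makes `P + Q` prime.
-/

open Polynomial

theorem AdicallyClosed.exists_pow_eq {n : ℕ} {R : Type*} [CommRing R] (hR : AdicallyClosed n R)
    (hn : n ≠ 0) (c : R) : ∃ ρ : R, ρ ^ n = c := by
  nontriviality R
  obtain ⟨ρ, hρ⟩ := hR (X ^ n - C c) (monic_X_pow_sub_C c hn) natDegree_X_pow_sub_C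
  exact ⟨ρ, by simpa [sub_eq_zero] using hρ⟩

namespace Ideal

section PowerPrime

variable {R : Type*} [CommRing R] {I : Ideal R} {m : ℕ}
  (hI : ∀ g y : R, g ^ m * y ∈ I → y ∈ I ∨ g ^ m ∈ I)
include hI

theorem pow_mem_of_pow_mul_succ_mem (g : R) (k : ℕ) (hg : g ^ (m * (k + 1)) ∈ I) :
    g ^ m ∈ I := by
  induction k with
  | zero => simpa using hg
  | succ k ih =>
    have hsplit : g ^ (m * (k + 2)) = (g ^ (k + 1)) ^ m * g ^ m := by ring
    rcases hI _ _ (hsplit ▸ hg) with h | h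
    · exact h
    · exact ih (by rwa [← pow_mul, mul_comm] at h)

theorem isPrime_of_forall_pow_mul_mem (hm : m ≠ 0) (hItop : I ≠ ⊤)
    (hroot : ∀ x : R, ∃ ξ : R, ξ ^ (m + 1) = x) : I.IsPrime := by
  have mem_of_pow_mem : ∀ x, x ^ m ∈ I → x ∈ I := by
    intro x hx
    obtain ⟨ξ, rfl⟩ := hroot x
    have hξ : ξ ^ m ∈ I :=
      pow_mem_of_pow_mul_succ_mem hI ξ m (by rwa [← pow_mul, mul_comm] at hx)
    simpa [pow_succ] using I.mul_mem_right ξ hξ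
  refine ⟨hItop, fun {x y} hxy => ?_⟩
  have hxmy : x ^ m * y ∈ I := by
    obtain ⟨k, rfl⟩ := Nat.exists_eq_add_one_of_ne_zero hm
    simpa [pow_succ, mul_assoc] using I.mul_mem_left (x ^ k) hxy
  rcases hI x y hxmy with hy | hx
  · exact Or.inr hy
  · exact Or.inl (mem_of_pow_mem x hx)

end PowerPrime

variable {R : Type*} [CommRing R] {m : ℕ}

theorem exists_mem_sub_pow_mul_eq {Q : Ideal R} [hQ : Q.IsPrime]
    (hroots : ∀ a b : R, a ∉ Q → b ∈ Q → ∃ α : R, α ∉ Q ∧ α ^ (m + 1) + a * α ^ m + b = 0)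
    {a : R} (ha : a ∉ Q) {c : R} (hc : c ∈ Q) : ∃ e ∈ Q, (a - e) ^ m * e = c := by
  obtain ⟨α, hαQ, hα⟩ := hroots a (-(-1) ^ m * c) ha (Q.mul_mem_left _ hc)
  have hfactor : α ^ m * (α + a) = (-1) ^ m * c := by linear_combination hα
  have hαa : α + a ∈ Q :=
    (hQ.mem_or_mem (hfactor ▸ Q.mul_mem_left _ hc)).resolve_left
      (fun h => hαQ (hQ.mem_of_pow_mem _ h))
  refine ⟨α + a, hαa, ?_⟩
  calc (a - (α + a)) ^ m * (α + a) = (-1) ^ m * (α ^ m * (α + a)) := by ring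
    _ = ((-1) ^ m) ^ 2 * c := by rw [hfactor]; ring
    _ = c := by rw [← pow_mul, Even.neg_one_pow ⟨m, by ring⟩, one_mul]

theorem exists_mem_sub_pow_mul_sub_mem {P Q : Ideal R} (hPQ : ¬P ≤ Q)
    (hsurj : ∀ a ∉ Q, ∀ c ∈ Q, ∃ e ∈ Q, (a - e) ^ m * e = c) (a : R) {c : R} (hc : c ∈ Q) :
    ∃ e ∈ Q, (a - e) ^ m * e - c ∈ P := by
  obtain ⟨a', ha'Q, haa'⟩ : ∃ a' ∉ Q, a - a' ∈ P := by
    obtain ⟨p, hpP, hpQ⟩ := SetLike.not_le_iff_exists.mp hPQ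
    by_cases ha : a ∈ Q
    · exact ⟨a + p, fun h => hpQ (by simpa using Q.sub_mem h ha), by simpa using P.neg_mem hpP⟩
    · exact ⟨a, ha, by simp⟩
  obtain ⟨e, he, hfe⟩ := hsurj a' ha'Q c hc
  refine ⟨e, he, ?_⟩
  have hpow : (a - e) ^ m - (a' - e) ^ m ∈ P :=
    P.mem_of_dvd (by simpa using sub_dvd_pow_sub_pow (a - e) (a' - e) m) haa'
  simpa [← hfe, sub_mul] using P.mul_mem_right e hpow

theorem mem_or_pow_mem_sup_of_pow_mul_mem_sup {P Q : Ideal R} [hP : P.IsPrime]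
    (hcover : ∀ a, ∀ c ∈ Q, ∃ e ∈ Q, (a - e) ^ m * e - c ∈ P) {g y : R}
    (hgy : g ^ m * y ∈ P ⊔ Q) : y ∈ P ⊔ Q ∨ g ^ m ∈ P ⊔ Q := by
  obtain ⟨u, hu, v, hv, huv⟩ := Submodule.mem_sup.mp hgy
  obtain ⟨e, he, hev⟩ := hcover (g + y) v hv
  obtain ⟨t, ht⟩ := sub_dvd_pow_sub_pow (g + y - e) g m
  have hfactor : (e - y) * (g ^ m - t * e) ∈ P := by
    have hdiff : (e - y) * (g ^ m - t * e) = ((g + y - e) ^ m * e - v) - u := by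
      linear_combination (-e) * ht + huv
    rw [hdiff]
    exact P.sub_mem hev hu
  rcases hP.mem_or_mem hfactor with h | h
  · left
    simpa using Submodule.sub_mem _ (Submodule.mem_sup_right he) (Submodule.mem_sup_left h)
  · right
    simpa using Submodule.add_mem _ (Submodule.mem_sup_left h)
      (Submodule.mem_sup_right (Q.mul_mem_left t he))

end Ideal

/-- Let `R` be an `n`-adically closed ring (`n > 1`) such that for every prime `p`, all
`a ∉ p` and `b ∈ p`, the polynomial `T ^ n + a * T ^ (n - 1) + b` has a root outside `p`.
Then the sum of two prime ideals of `R` is either the whole ring or a prime ideal. -/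
theorem sum_primes_eq_top_or_isPrime_of_special_roots {R : Type*} [CommRing R] (n : ℕ)
    (hn : 1 < n) (hR : AdicallyClosed n R)
    (h : ∀ p : Ideal R, p.IsPrime → ∀ a b : R, a ∉ p → b ∈ p →
      ∃ α : R, α ∉ p ∧ α ^ n + a * α ^ (n - 1) + b = 0)
    (P Q : Ideal R) (hP : P.IsPrime) (hQ : Q.IsPrime) :
    P + Q = ⊤ ∨ (P + Q).IsPrime := by
  obtain ⟨m, rfl⟩ : ∃ m, n = m + 1 := ⟨n - 1, by omega⟩
  rw [Submodule.add_eq_sup]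
  by_cases htop : P ⊔ Q = ⊤
  · exact Or.inl htop
  by_cases hPQ : P ≤ Q
  · exact Or.inr (by rwa [sup_eq_right.mpr hPQ])
  have hroots : ∀ a b : R, a ∉ Q → b ∈ Q → ∃ α : R, α ∉ Q ∧ α ^ (m + 1) + a * α ^ m + b = 0 := by
    simpa using h Q hQ
  have hsurj : ∀ a ∉ Q, ∀ c ∈ Q, ∃ e ∈ Q, (a - e) ^ m * e = c :=
    fun _ ha _ hc => Ideal.exists_mem_sub_pow_mul_eq hroots ha hc
  exact Or.inr <| Ideal.isPrime_of_forall_pow_mul_mem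
    (fun _ _ => Ideal.mem_or_pow_mem_sup_of_pow_mul_mem_sup
      (Ideal.exists_mem_sub_pow_mul_sub_mem hPQ hsurj))
    (by omega) htop (hR.exists_pow_eq (by omega))
end

section
/- Let R be a ring and n > 1 a natural number. Assume that for every prime ideal p ⊆ R and all a, b ∈ R with a ∉ p and b ∈ p, the polynomial T^n + a·T^{n−1} + b ∈ R[T] has a root α ∈ R with α ∉ p. Then for any two prime ideals P, Q of R with P + Q ≠ R, the ideal P + Q is a primary ideal. -/
/-!
Let `x * y ∈ P + Q`, write `s = x + y`, and assume `s ∉ Q` (otherwise `y ^ 2 = y * s - x * y`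
already lies in `P + Q`). Write `n = m + 2`. For `f T = T ^ (m + 1) * (T - s)` we have
`f y = -y ^ m * x * y`, so splitting `x * y = p + q` and taking a root `α ∉ Q` of
`f T + y ^ m * q` gives `f y - f α ∈ P` and `α ≡ s (mod Q)`. Dividing `f y - f α` by `y - α`
leaves a quotient congruent to `y ^ (m + 1)` modulo `Q`, and primality of `P` finishes the proof:
either `y - α ∈ P`, whence `x = (s - α) + (α - y) ∈ P + Q`, or `y ^ (m + 1) ∈ P + Q`.
-/

namespace Ideal

variable {R : Type*} [CommRing R]

lemma sq_mem_of_mul_mem_of_add_mem {I : Ideal R} {x y : R} (hxy : x * y ∈ I)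
    (hs : x + y ∈ I) : y ^ 2 ∈ I := by
  have hy : y ^ 2 = y * (x + y) - x * y := by ring
  rw [hy]
  exact sub_mem (I.mul_mem_left y hs) hxy

lemma exists_sub_mul_pow_add_eq (k : ℕ) (s u v : R) :
    ∃ H, (u - v) * (u ^ k + (v - s) * H) = u ^ k * (u - s) - v ^ k * (v - s) := by
  obtain ⟨H, hH⟩ := sub_dvd_pow_sub_pow u v k
  exact ⟨H, by linear_combination (s - v) * hH⟩

lemma mem_sup_or_pow_mem_sup_of_add_notMem {P Q : Ideal R} [P.IsPrime] [hQ : Q.IsPrime] {m : ℕ}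
    (hroot : ∀ a b : R, a ∉ Q → b ∈ Q →
      ∃ α : R, α ∉ Q ∧ α ^ (m + 2) + a * α ^ (m + 1) + b = 0)
    {x y : R} (hxy : x * y ∈ P ⊔ Q) (hs : x + y ∉ Q) :
    x ∈ P ⊔ Q ∨ y ^ (m + 1) ∈ P ⊔ Q := by
  obtain ⟨p, hp, q, hq, hpq⟩ := Submodule.mem_sup.mp hxy
  obtain ⟨α, hαQ, hα⟩ := hroot (-(x + y)) (y ^ m * q) (by rwa [neg_mem_iff])
    (Q.mul_mem_left _ hq)
  have hαs : α - (x + y) ∈ Q := by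
    refine (IsPrime.mul_mem_left_iff (mt (hQ.mem_of_pow_mem (m + 1)) hαQ)).mp ?_
    have he : α ^ (m + 1) * (α - (x + y)) = -(y ^ m * q) := by linear_combination hα
    exact he ▸ Q.neg_mem (Q.mul_mem_left _ hq)
  obtain ⟨H, hH⟩ := exists_sub_mul_pow_add_eq (m + 1) (x + y) y α
  have hP : (y - α) * (y ^ (m + 1) + (α - (x + y)) * H) ∈ P := by
    have he : (y - α) * (y ^ (m + 1) + (α - (x + y)) * H) = -(y ^ m * p) := by
      linear_combination hH - hα + y ^ m * hpq
    exact he ▸ P.neg_mem (P.mul_mem_left _ hp)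
  rcases IsPrime.mem_or_mem ‹_› hP with hyα | hquot
  · left
    have hx : x = -(y - α) - (α - (x + y)) := by ring
    exact hx ▸ sub_mem (mem_sup_left (P.neg_mem hyα)) (mem_sup_right hαs)
  · right
    have hy : y ^ (m + 1) = (y ^ (m + 1) + (α - (x + y)) * H) - (α - (x + y)) * H := by ring
    exact hy ▸ sub_mem (mem_sup_left hquot) (mem_sup_right (Q.mul_mem_right _ hαs))

end Ideal

/-- Let `R` be a ring and `n > 1` a natural number such that for every prime `p`, all
`a ∉ p` and `b ∈ p`, the polynomial `T ^ n + a * T ^ (n - 1) + b` has a root outside `p`.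
Then for any prime ideals `P, Q` with `P + Q ≠ R`, the ideal `P + Q` is primary. -/
theorem sum_primes_isPrimary_of_special_roots {R : Type*} [CommRing R] (n : ℕ)
    (hn : 1 < n)
    (h : ∀ p : Ideal R, p.IsPrime → ∀ a b : R, a ∉ p → b ∈ p →
      ∃ α : R, α ∉ p ∧ α ^ n + a * α ^ (n - 1) + b = 0)
    (P Q : Ideal R) (hP : P.IsPrime) (hQ : Q.IsPrime) (hPQ : P + Q ≠ ⊤) :
    (P + Q).IsPrimary := by
  obtain ⟨m, rfl⟩ : ∃ m, n = m + 2 := ⟨n - 2, by omega⟩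
  rw [Submodule.add_eq_sup] at hPQ ⊢
  refine Ideal.isPrimary_iff.mpr ⟨hPQ, fun {x y} hxy => ?_⟩
  by_cases hs : x + y ∈ Q
  · exact Or.inr ⟨2, Ideal.sq_mem_of_mul_mem_of_add_mem hxy (Ideal.mem_sup_right hs)⟩
  · exact (Ideal.mem_sup_or_pow_mem_sup_of_add_notMem (h Q hQ) hxy hs).imp_right
      fun hy => ⟨m + 1, hy⟩
end

section
/- Let R be an n-adically closed reduced ring. Then for every natural number m ≥ 1 dividing n, R is m-adically closed. -/
open Polynomial

theorem Polynomial.IsRoot.of_pow {R : Type*} [CommSemiring R] [IsReduced R] {p : R[X]} {k : ℕ}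
    {x : R} (h : (p ^ k).IsRoot x) : p.IsRoot x :=
  IsReduced.eq_zero _ ⟨k, by rwa [IsRoot, eval_pow] at h⟩

theorem AdicallyClosed.of_mul {R : Type*} [CommRing R] [IsReduced R] {m k : ℕ}
    (h : AdicallyClosed (m * k) R) : AdicallyClosed m R := by
  intro p hp hdeg
  obtain ⟨x, hx⟩ := h (p ^ k) (hp.pow k) (by rw [hp.natDegree_pow, hdeg, mul_comm])
  exact ⟨x, hx.of_pow⟩

theorem adicallyClosed_of_dvd_general {R : Type*} [CommRing R] [IsReduced R] {n m : ℕ}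
    (hR : AdicallyClosed n R) (hmn : m ∣ n) : AdicallyClosed m R := by
  obtain ⟨k, rfl⟩ := hmn
  exact hR.of_mul

/-- A reduced `n`-adically closed ring is `m`-adically closed for every `m ≥ 1`
dividing `n`. -/
theorem adicallyClosed_of_dvd {R : Type*} [CommRing R] [IsReduced R] {n m : ℕ}
    (hR : AdicallyClosed n R) (hm : 1 ≤ m) (hmn : m ∣ n) : AdicallyClosed m R :=
  adicallyClosed_of_dvd_general hR hmn
end

section
/- Let R be a ring. The following are equivalent: (a) R satisfies the irreducible intersection property; (b) for every proper ideal I ⊊ R, if the set Σ = {p ∈ Spec(R) : p ⊆ I} is nonempty, then Σ has a unique maximal element with respect to inclusion; (c) for any two distinct prime ideals p₁, p₂ of R with p₁ + p₂ ≠ R, the set {p ∈ Spec(R) : p ⊆ p₁ + p₂} has a unique maximal element with respect to inclusion. -/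
/-- A ring `R` satisfies the *irreducible intersection property* if for any two prime
ideals `p₁, p₂` of `R`, either `p₁ + p₂ = R` or `p₁ + p₂` is a prime ideal. -/
def IrreducibleIntersectionProperty (R : Type*) [CommRing R] : Prop :=
  ∀ p₁ p₂ : Ideal R, p₁.IsPrime → p₂.IsPrime → p₁ + p₂ = ⊤ ∨ (p₁ + p₂).IsPrime

namespace Ideal

variable {R : Type*} [CommSemiring R]

theorem isPrime_sSup_of_isChain {c : Set (Ideal R)} (hne : c.Nonempty)
    (hc : IsChain (· ≤ ·) c) (hp : ∀ p ∈ c, p.IsPrime) : (sSup c).IsPrime := by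
  have mem_sSup {x : R} : x ∈ sSup c ↔ ∃ p ∈ c, x ∈ p :=
    Submodule.mem_sSup_of_directed hne hc.directedOn
  refine ⟨fun htop => ?_, fun {x y} hxy => ?_⟩
  · obtain ⟨p, hpc, hp1⟩ := mem_sSup.1 ((eq_top_iff_one _).1 htop)
    exact (hp p hpc).ne_top ((eq_top_iff_one p).2 hp1)
  · obtain ⟨p, hpc, hxyp⟩ := mem_sSup.1 hxy
    exact ((hp p hpc).mem_or_mem hxyp).imp (fun hx => mem_sSup.2 ⟨p, hpc, hx⟩)
      (fun hy => mem_sSup.2 ⟨p, hpc, hy⟩)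

theorem exists_le_maximal_isPrime_le {I q : Ideal R} (hq : q.IsPrime) (hqI : q ≤ I) :
    ∃ P, q ≤ P ∧ Maximal (fun p : Ideal R => p.IsPrime ∧ p ≤ I) P :=
  zorn_le_nonempty₀ {p : Ideal R | p.IsPrime ∧ p ≤ I}
    (fun c hcs hc _ hy => ⟨sSup c,
      ⟨isPrime_sSup_of_isChain ⟨_, hy⟩ hc fun _ hp => (hcs hp).1, sSup_le fun _ hp => (hcs hp).2⟩,
      fun _ hz => le_sSup hz⟩)
    q ⟨hq, hqI⟩

theorem eq_of_maximal_isPrime_le_of_isPrime_sup {I P Q : Ideal R}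
    (hP : Maximal (fun p : Ideal R => p.IsPrime ∧ p ≤ I) P)
    (hQ : Maximal (fun p : Ideal R => p.IsPrime ∧ p ≤ I) Q) (hPQ : (P ⊔ Q).IsPrime) :
    P = Q := by
  have hPQI : P ⊔ Q ≤ I := sup_le hP.prop.2 hQ.prop.2
  calc P = P ⊔ Q := le_antisymm le_sup_left (hP.le_of_ge ⟨hPQ, hPQI⟩ le_sup_left)
    _ = Q := le_antisymm (hQ.le_of_ge ⟨hPQ, hPQI⟩ le_sup_right) le_sup_right

/-- The maximal primes below `p₁ ⊔ p₂` above `p₁` and above `p₂` coincide, so that prime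
contains `p₁ ⊔ p₂`. -/
theorem isPrime_sup_of_existsUnique_maximal {p₁ p₂ : Ideal R} (h₁ : p₁.IsPrime)
    (h₂ : p₂.IsPrime)
    (h : ∃! P : Ideal R, Maximal (fun p : Ideal R => p.IsPrime ∧ p ≤ p₁ ⊔ p₂) P) :
    (p₁ ⊔ p₂).IsPrime := by
  obtain ⟨P, hP, huniq⟩ := h
  obtain ⟨P₁, hp₁P₁, hP₁⟩ := exists_le_maximal_isPrime_le h₁ le_sup_left
  obtain ⟨P₂, hp₂P₂, hP₂⟩ := exists_le_maximal_isPrime_le h₂ le_sup_right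
  have hsupP : p₁ ⊔ p₂ ≤ P := sup_le (huniq P₁ hP₁ ▸ hp₁P₁) (huniq P₂ hP₂ ▸ hp₂P₂)
  exact le_antisymm hsupP hP.prop.2 ▸ hP.prop.1

end Ideal

/-- For a ring `R` the following are equivalent: (a) `R` has the irreducible intersection
property; (b) for every proper ideal `I` below which there is a prime ideal, the set of
prime ideals contained in `I` has a unique maximal element; (c) for any two distinct
prime ideals `p₁, p₂` with `p₁ + p₂ ≠ R`, the set of prime ideals contained in `p₁ + p₂`
has a unique maximal element. -/
theorem irreducibleIntersectionProperty_tfae {R : Type*} [CommRing R] :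
    List.TFAE
      [ IrreducibleIntersectionProperty R,
        ∀ I : Ideal R, I ≠ ⊤ → (∃ p : Ideal R, p.IsPrime ∧ p ≤ I) →
          ∃! P : Ideal R, Maximal (fun p : Ideal R => p.IsPrime ∧ p ≤ I) P,
        ∀ p₁ p₂ : Ideal R, p₁.IsPrime → p₂.IsPrime → p₁ ≠ p₂ → p₁ + p₂ ≠ ⊤ →
          ∃! P : Ideal R, Maximal (fun p : Ideal R => p.IsPrime ∧ p ≤ p₁ + p₂) P ] := by
  tfae_have 1 → 2 := by
    rintro hIIP I hI ⟨q, hq, hqI⟩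
    obtain ⟨P, -, hP⟩ := Ideal.exists_le_maximal_isPrime_le hq hqI
    refine ⟨P, hP, fun Q hQ => ?_⟩
    have hPQ : P + Q ≠ ⊤ := ne_top_of_le_ne_top hI (sup_le hP.prop.2 hQ.prop.2)
    exact (Ideal.eq_of_maximal_isPrime_le_of_isPrime_sup hP hQ
      ((hIIP P Q hP.prop.1 hQ.prop.1).resolve_left hPQ)).symm
  tfae_have 2 → 3 := fun h p₁ p₂ h₁ _ _ hne => h _ hne ⟨p₁, h₁, le_sup_left⟩
  tfae_have 3 → 1 := by
    intro h p₁ p₂ h₁ h₂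
    by_cases hne : p₁ + p₂ = ⊤
    · exact Or.inl hne
    by_cases heq : p₁ = p₂
    · subst heq
      simpa using Or.inr h₁
    exact Or.inr (Ideal.isPrime_sup_of_existsUnique_maximal h₁ h₂ (h p₁ p₂ h₁ h₂ heq hne))
  tfae_finish
end

section
/- Let A be a ring satisfying the irreducible intersection property and let φ : A → B be an injective ring homomorphism such that (i) for every prime ideal p ⊆ A there exists a prime ideal q ⊆ B with q ∩ A = p (lying over), and (ii) for every prime ideal q ⊆ B, the extension of its contraction satisfies (q ∩ A)B = q. Then B satisfies the irreducible intersection property. -/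
namespace Ideal

variable {A B : Type*} [CommRing A] [CommRing B] {φ : A →+* B}

theorem sup_eq_map_sup_comap {I J : Ideal B} (hI : (I.comap φ).map φ = I)
    (hJ : (J.comap φ).map φ = J) : I ⊔ J = (I.comap φ ⊔ J.comap φ).map φ := by
  rw [map_sup, hI, hJ]

end Ideal

theorem irreducibleIntersectionProperty_of_liesOver_general {A B : Type*} [CommRing A]
    [CommRing B] (hA : IrreducibleIntersectionProperty A) (φ : A →+* B)
    (h1 : ∀ p : Ideal A, p.IsPrime → ∃ q : Ideal B, q.IsPrime ∧ q.comap φ = p)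
    (h2 : ∀ q : Ideal B, q.IsPrime → (q.comap φ).map φ = q) :
    IrreducibleIntersectionProperty B := by
  intro q₁ q₂ hq₁ hq₂
  have hsum : q₁ + q₂ = (q₁.comap φ + q₂.comap φ).map φ :=
    Ideal.sup_eq_map_sup_comap (h2 q₁ hq₁) (h2 q₂ hq₂)
  rw [hsum]
  rcases hA _ _ (hq₁.comap φ) (hq₂.comap φ) with htop | hprime
  · exact .inl (by rw [htop, Ideal.map_top])
  · obtain ⟨q, hq, hqp⟩ := h1 _ hprime
    rw [← hqp, h2 q hq]
    exact .inr hq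

/-- Let `A` satisfy the irreducible intersection property and let `φ : A → B` be an
injective ring map satisfying lying over and such that every prime of `B` is the extension
of its contraction. Then `B` satisfies the irreducible intersection property. -/
theorem irreducibleIntersectionProperty_of_liesOver {A B : Type*} [CommRing A]
    [CommRing B] (hA : IrreducibleIntersectionProperty A) (φ : A →+* B)
    (hinj : Function.Injective φ)
    (h1 : ∀ p : Ideal A, p.IsPrime → ∃ q : Ideal B, q.IsPrime ∧ q.comap φ = p)
    (h2 : ∀ q : Ideal B, q.IsPrime → (q.comap φ).map φ = q) :
    IrreducibleIntersectionProperty B :=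
  irreducibleIntersectionProperty_of_liesOver_general hA φ h1 h2
end

section
/- Let φ : A → B be a ring homomorphism such that (i) for every prime ideal p ⊆ A, the extended ideal pB is a prime ideal of B, and (ii) for every ideal I ⊆ A, the contraction of the extension satisfies IB ∩ A = I. If B satisfies the irreducible intersection property, then A satisfies the irreducible intersection property. In particular, if the polynomial ring A[x₁, …, x_n] satisfies the irreducible intersection property, then so does A. -/
universe u

namespace MvPolynomial

variable {R σ : Type*} [CommRing R]

theorem map_C_eq_ker_map_mk (I : Ideal R) :
    I.map (C : R →+* MvPolynomial σ R) = RingHom.ker (map (Ideal.Quotient.mk I)) := by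
  rw [ker_map, Ideal.mk_ker]

theorem isPrime_map_C {p : Ideal R} (hp : p.IsPrime) :
    (p.map (C : R →+* MvPolynomial σ R)).IsPrime := by
  rw [map_C_eq_ker_map_mk]
  exact RingHom.ker_isPrime _

theorem comap_C_map_C (I : Ideal R) :
    (I.map (C : R →+* MvPolynomial σ R)).comap C = I := by
  rw [map_C_eq_ker_map_mk, RingHom.comap_ker, map_comp_C,
    RingHom.ker_comp_of_injective _ (C_injective σ _), Ideal.mk_ker]

end MvPolynomial

theorem IrreducibleIntersectionProperty.of_ringHom {A B : Type*} [CommRing A] [CommRing B]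
    (φ : A →+* B) (hprime : ∀ p : Ideal A, p.IsPrime → (p.map φ).IsPrime)
    (hcomap : ∀ I : Ideal A, (I.map φ).comap φ = I) (hB : IrreducibleIntersectionProperty B) :
    IrreducibleIntersectionProperty A := by
  intro p₁ p₂ h₁ h₂
  have hsum : p₁ + p₂ = (p₁.map φ + p₂.map φ).comap φ := by
    rw [← hcomap (p₁ + p₂), Ideal.add_eq_sup, Ideal.map_sup, Ideal.add_eq_sup]
  rw [hsum]
  rcases hB _ _ (hprime p₁ h₁) (hprime p₂ h₂) with htop | hsum_prime
  · exact .inl (htop ▸ Ideal.comap_top)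
  · exact .inr (hsum_prime.comap φ)

/-- If `φ : A → B` is a ring map such that the extension of every prime ideal of `A` is
prime and every ideal of `A` is the contraction of its extension, then the irreducible
intersection property descends from `B` to `A`.  In particular, if a polynomial ring
`A[x₁, …, x_n]` satisfies the irreducible intersection property, then so does `A`. -/
theorem irreducibleIntersectionProperty_descends :
    (∀ (A B : Type u) [CommRing A] [CommRing B] (φ : A →+* B),
        (∀ p : Ideal A, p.IsPrime → (p.map φ).IsPrime) →
        (∀ I : Ideal A, (I.map φ).comap φ = I) →
        IrreducibleIntersectionProperty B → IrreducibleIntersectionProperty A) ∧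
      (∀ (A : Type u) [CommRing A] (n : ℕ),
        IrreducibleIntersectionProperty (MvPolynomial (Fin n) A) →
        IrreducibleIntersectionProperty A) :=
  ⟨fun _ _ _ _ φ => .of_ringHom φ,
    fun _ _ _ => .of_ringHom MvPolynomial.C (fun _ => MvPolynomial.isPrime_map_C)
      MvPolynomial.comap_C_map_C⟩
end

section
/- Let R be a quadratically closed ring. Then there is no polygon in R: there do not exist an integer n > 2 and prime ideals P₀, …, P_{n−1} and Q₀, …, Q_{n−1} of R such that P_i ⊆ Q_j if and only if i = j or i = j + 1 (mod n). More generally, for every m ≥ 1, a 2m-adically closed ring has no polygons. -/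
/-!
Choose `b, c, a` such that `f = X² - (b + c) X + a` is `X (X - (b + c))` modulo `P i` for `i ≠ 0`
and `(X - b) (X - c)` modulo `P 0`, where `b + c` lies in no `Q j` while `b ∈ Q (-1) \ Q 0` and
`c ∈ Q 0 \ Q (-1)`; such elements exist by prime avoidance. A root `r` of `f ^ m` is a root of `f`
modulo every prime. At a vertex `P i` with `i ≠ 0`, `r` is congruent to one of two roots that are
distinct modulo both adjacent `Q`'s, so `r ∈ Q (i - 1) ↔ r ∈ Q i`. Going once around the polygon
gives `r ∈ Q 0 ↔ r ∈ Q (-1)`, whereas at `P 0` the roots `b` and `c` force `r ∈ Q 0 ↔ r ∉ Q (-1)`.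
-/

universe u

/-- A *polygon* in a ring `R` consists of an integer `n > 2` and prime ideals
`P₀, …, P_{n-1}` (generic points of the irreducible closed sets `C_i = V(P_i)`) and
`Q₀, …, Q_{n-1}` (generic points of `D_j = V(Q_j)`) such that `D_j ⊆ C_i`, i.e.
`P_i ⊆ Q_j`, if and only if `i = j` or `i = j + 1 (mod n)`. -/
def HasPolygon (R : Type*) [CommRing R] : Prop :=
  ∃ n : ℕ, 2 < n ∧ ∃ P Q : ZMod n → Ideal R,
    (∀ i, (P i).IsPrime) ∧ (∀ j, (Q j).IsPrime) ∧
      ∀ i j, P i ≤ Q j ↔ (i = j ∨ i = j + 1)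

open Polynomial

variable {R : Type*} [CommRing R]

theorem ZMod.natCast_ne_zero_of_pos_of_lt {k n : ℕ} (hk : 0 < k) (hkn : k < n) :
    (k : ZMod n) ≠ 0 := by
  rw [Ne, ZMod.natCast_eq_zero_iff]
  exact Nat.not_dvd_of_pos_of_lt hk hkn

theorem ZMod.iff_neg_one_of_iff_add_one {n : ℕ} [NeZero n] {p : ZMod n → Prop}
    (h : ∀ j, j + 1 ≠ 0 → (p j ↔ p (j + 1))) : p 0 ↔ p (-1) := by
  have hp : ∀ k : ℕ, k < n → (p 0 ↔ p k) := by
    intro k hk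
    induction k with
    | zero => simp
    | succ k ih =>
      rw [ih (by omega), Nat.cast_succ]
      exact h k (by exact_mod_cast natCast_ne_zero_of_pos_of_lt k.succ_pos hk)
  have hn := NeZero.pos n
  simpa [Nat.cast_pred hn] using hp (n - 1) (by omega)

theorem ZMod.zero_ne_neg_one_ne_neg_two {n : ℕ} (hn : 2 < n) :
    (0 : ZMod n) ≠ -1 ∧ (0 : ZMod n) ≠ -2 ∧ (-1 : ZMod n) ≠ -2 := by
  have h1 : (1 : ZMod n) ≠ 0 := by
    exact_mod_cast ZMod.natCast_ne_zero_of_pos_of_lt one_pos (by omega)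
  have h2 : (2 : ZMod n) ≠ 0 := by exact_mod_cast ZMod.natCast_ne_zero_of_pos_of_lt two_pos hn
  exact ⟨fun h => h1 (by linear_combination h), fun h => h2 (by linear_combination h),
    fun h => h1 (by linear_combination h)⟩

namespace Ideal

theorem mem_iff_mem_of_sub_mem {I J : Ideal R} {r b : R} (h : r - b ∈ I) (hIJ : I ≤ J) :
    r ∈ J ↔ b ∈ J := by
  rw [← J.sub_mem_iff_left (hIJ h), sub_sub_cancel]

variable {P Q Q' : Ideal R} [P.IsPrime]

theorem mem_iff_mem_of_mul_sub_mem (hQ : P ≤ Q) (hQ' : P ≤ Q') {r s : R} (hs : s ∉ Q)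
    (hs' : s ∉ Q') (h : r * (r - s) ∈ P) : r ∈ Q ↔ r ∈ Q' := by
  rcases IsPrime.mem_or_mem ‹_› h with hr | hr
  · exact iff_of_true (hQ hr) (hQ' hr)
  · rw [mem_iff_mem_of_sub_mem hr hQ, mem_iff_mem_of_sub_mem hr hQ']
    exact iff_of_false hs hs'

theorem mem_iff_notMem_of_sub_mul_sub_mem (hQ : P ≤ Q) (hQ' : P ≤ Q') {r b c : R}
    (hb : b ∉ Q) (hb' : b ∈ Q') (hc : c ∈ Q) (hc' : c ∉ Q') (h : (r - b) * (r - c) ∈ P) :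
    r ∈ Q ↔ r ∉ Q' := by
  rcases IsPrime.mem_or_mem ‹_› h with hr | hr <;>
    rw [mem_iff_mem_of_sub_mem hr hQ, mem_iff_mem_of_sub_mem hr hQ'] <;> tauto

theorem exists_mem_forall_notMem_of_forall_not_le {ι : Type*} {s : Finset ι} {f : ι → Ideal R}
    (hf : ∀ i ∈ s, (f i).IsPrime) {I : Ideal R} (hI : ∀ i ∈ s, ¬I ≤ f i) :
    ∃ x ∈ I, ∀ i ∈ s, x ∉ f i := by
  rcases s.eq_empty_or_nonempty with rfl | ⟨i₀, -⟩
  · exact ⟨0, I.zero_mem, by simp⟩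
  have hnot : ¬(I : Set R) ⊆ ⋃ i ∈ (s : Set ι), f i := by
    rw [subset_union_prime i₀ i₀ fun i hi _ _ => hf i hi]
    simpa using hI
  obtain ⟨x, hxI, hx⟩ := Set.not_subset.mp hnot
  exact ⟨x, hxI, fun i hi hxi => hx (Set.mem_biUnion hi hxi)⟩

end Ideal

theorem AdicallyClosed.exists_isNilpotent_quadratic [Nontrivial R] {m : ℕ}
    (h : AdicallyClosed (2 * m) R) (s a : R) : ∃ r, IsNilpotent (r ^ 2 - s * r + a) := by
  have hmonic : (X ^ 2 - C s * X + C a : R[X]).Monic := by monicity!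
  have hdeg : (X ^ 2 - C s * X + C a : R[X]).natDegree = 2 := by compute_degree!
  obtain ⟨r, hr⟩ := h _ (hmonic.pow m) (by rw [hmonic.natDegree_pow, hdeg, mul_comm])
  exact ⟨r, m, by simpa using hr⟩

structure IsPolygon {n : ℕ} (P Q : ZMod n → Ideal R) : Prop where
  isPrime_P (i : ZMod n) : (P i).IsPrime
  isPrime_Q (j : ZMod n) : (Q j).IsPrime
  le_iff (i j : ZMod n) : P i ≤ Q j ↔ i = j ∨ i = j + 1

structure SwapsRoots {n : ℕ} (P Q : ZMod n → Ideal R) (b c a : R) : Prop where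
  b_notMem : b ∉ Q 0
  b_mem : b ∈ Q (-1)
  c_mem : c ∈ Q 0
  c_notMem : c ∉ Q (-1)
  add_notMem (j : ZMod n) : b + c ∉ Q j
  a_mem (i : ZMod n) : i ≠ 0 → a ∈ P i
  mul_sub_mem : b * c - a ∈ P 0

namespace IsPolygon

variable {n : ℕ} {P Q : ZMod n → Ideal R}

theorem le_self (h : IsPolygon P Q) (i : ZMod n) : P i ≤ Q i :=
  (h.le_iff i i).2 (.inl rfl)

theorem add_one_le (h : IsPolygon P Q) (j : ZMod n) : P (j + 1) ≤ Q j :=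
  (h.le_iff _ j).2 (.inr rfl)

theorem zero_le_neg_one (h : IsPolygon P Q) : P 0 ≤ Q (-1) := by
  simpa using h.add_one_le (-1)

theorem nontrivial (h : IsPolygon P Q) : Nontrivial R :=
  nontrivial_of_ne 1 0 fun h10 => (h.isPrime_P 0).one_notMem (h10 ▸ (P 0).zero_mem)

theorem eq_of_Q_le_Q (h : IsPolygon P Q) (hn : 2 < n) {j k : ZMod n} (hjk : Q j ≤ Q k) :
    j = k := by
  obtain ⟨h01, h02, h12⟩ := ZMod.zero_ne_neg_one_ne_neg_two hn
  have := (h.le_iff j k).1 ((h.le_self j).trans hjk)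
  have := (h.le_iff (j + 1) k).1 ((h.add_one_le j).trans hjk)
  grind

theorem exists_notMem_Q_neg_one (h : IsPolygon P Q) (hn : 2 < n) :
    ∃ g, (∀ i, i ≠ 0 → i ≠ -1 → g ∈ P i) ∧ (∀ j ≠ -1, g ∈ Q j) ∧ g ∉ Q (-1) := by
  have : NeZero n := ⟨by omega⟩
  obtain ⟨h01, h02, h12⟩ := ZMod.zero_ne_neg_one_ne_neg_two hn
  let S := Finset.univ.filter fun i : ZMod n => i ≠ 0 ∧ i ≠ -1
  have hS : ¬S.inf P ≤ Q (-1) := by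
    simp only [(h.isPrime_Q _).inf_le', S, Finset.mem_filter, h.le_iff, neg_add_cancel]
    grind
  obtain ⟨g, hgS, hg⟩ := SetLike.not_le_iff_exists.mp hS
  have hgP : ∀ i, i ≠ 0 → i ≠ -1 → g ∈ P i := fun i hi₀ hi₁ =>
    Submodule.mem_finsetInf.1 hgS i (by simp [S, hi₀, hi₁])
  refine ⟨g, hgP, fun j hj => ?_, hg⟩
  by_cases hj₂ : j = -2
  · exact h.le_self j (hgP j (by grind) (by grind))
  · exact h.add_one_le j (hgP _ (by grind) (by grind))

theorem exists_mem_P_zero_notMem_Q_neg_two (h : IsPolygon P Q) (hn : 2 < n) :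
    ∃ t ∈ P 0, (∀ j ≠ -2, t ∈ Q j) ∧ t ∉ Q (-2) := by
  have : NeZero n := ⟨by omega⟩
  obtain ⟨h01, h02, h12⟩ := ZMod.zero_ne_neg_one_ne_neg_two hn
  let S := Finset.univ.filter fun j : ZMod n => j ≠ -2
  have hT : ¬P 0 ⊓ S.inf Q ≤ Q (-2) := by
    simp only [(h.isPrime_Q _).inf_le, (h.isPrime_Q _).inf_le', S, Finset.mem_filter, h.le_iff,
      show (-2 : ZMod n) + 1 = -1 by ring]
    refine not_or.2 ⟨by grind, fun ⟨j, hj, hjQ⟩ => hj.2 (h.eq_of_Q_le_Q hn hjQ)⟩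
  obtain ⟨t, ⟨htP, htS⟩, ht⟩ := SetLike.not_le_iff_exists.mp hT
  exact ⟨t, htP, fun j hj => Submodule.mem_finsetInf.1 htS j (by simp [S, hj]), ht⟩

theorem exists_mem_P_neg_one_notMem_Q [NeZero n] (h : IsPolygon P Q) :
    ∃ b ∈ P (-1), ∀ j, j ≠ -2 → j ≠ -1 → b ∉ Q j := by
  obtain ⟨b, hbP, hbQ⟩ := Ideal.exists_mem_forall_notMem_of_forall_not_le
    (s := Finset.univ.filter fun j : ZMod n => j ≠ -2 ∧ j ≠ -1) (I := P (-1))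
    (fun j _ => h.isPrime_Q j) (by simp only [Finset.mem_filter, h.le_iff]; grind)
  exact ⟨b, hbP, fun j hj₂ hj₁ => hbQ j (by simp [hj₂, hj₁])⟩

theorem exists_swapsRoots (h : IsPolygon P Q) (hn : 2 < n) : ∃ b c a, SwapsRoots P Q b c a := by
  have : NeZero n := ⟨by omega⟩
  obtain ⟨h01, h02, h12⟩ := ZMod.zero_ne_neg_one_ne_neg_two hn
  obtain ⟨g, hgP, hgQ, hg⟩ := h.exists_notMem_Q_neg_one hn
  obtain ⟨t, htP, htQ, ht⟩ := h.exists_mem_P_zero_notMem_Q_neg_two hn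
  obtain ⟨b, hbP, hbQ⟩ := h.exists_mem_P_neg_one_notMem_Q
  have htQ₁ : t ∈ Q (-1) := h.zero_le_neg_one htP
  have hbQ₁ : b ∈ Q (-1) := h.le_self _ hbP
  have hbQ₂ : b ∈ Q (-2) := h.add_one_le (-2) (by rwa [show (-2 : ZMod n) + 1 = -1 by ring])
  refine ⟨b, g + t, b * g, hbQ 0 (by grind) (by grind), hbQ₁,
    add_mem (hgQ 0 (by grind)) (h.le_self 0 htP), by rwa [Submodule.add_mem_iff_left _ htQ₁],
    fun j => ?_, fun i hi => ?_, ?_⟩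
  · by_cases hj₁ : j = -1
    · subst hj₁
      rwa [Submodule.add_mem_iff_right _ hbQ₁, Submodule.add_mem_iff_left _ htQ₁]
    by_cases hj₂ : j = -2
    · subst hj₂
      rwa [Submodule.add_mem_iff_right _ hbQ₂, Submodule.add_mem_iff_right _ (hgQ _ hj₁)]
    · rw [Submodule.add_mem_iff_left _ (add_mem (hgQ j hj₁) (htQ j hj₂))]
      exact hbQ j hj₂ hj₁
  · by_cases hi₁ : i = -1
    · exact hi₁ ▸ Ideal.mul_mem_right _ _ hbP
    · exact Ideal.mul_mem_left _ _ (hgP i hi hi₁)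
  · rw [mul_add, add_sub_cancel_left]
    exact Ideal.mul_mem_left _ _ htP

theorem not_isNilpotent [NeZero n] (h : IsPolygon P Q) {b c a : R} (hs : SwapsRoots P Q b c a)
    (r : R) : ¬IsNilpotent (r ^ 2 - (b + c) * r + a) := by
  rintro ⟨k, hk⟩
  have hmem : ∀ i, r ^ 2 - (b + c) * r + a ∈ P i := fun i =>
    (h.isPrime_P i).mem_of_pow_mem k (hk ▸ (P i).zero_mem)
  have hedge : ∀ j, j + 1 ≠ 0 → (r ∈ Q j ↔ r ∈ Q (j + 1)) := fun j hj =>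
    have := h.isPrime_P (j + 1)
    Ideal.mem_iff_mem_of_mul_sub_mem (h.add_one_le j) (h.le_self _) (hs.add_notMem j)
      (hs.add_notMem _) (by convert (P _).sub_mem (hmem (j + 1)) (hs.a_mem _ hj) using 1; ring)
  have := h.isPrime_P 0
  have hswap := Ideal.mem_iff_notMem_of_sub_mul_sub_mem (r := r) (h.le_self 0)
    h.zero_le_neg_one hs.b_notMem hs.b_mem hs.c_mem hs.c_notMem
    (by convert (P 0).add_mem (hmem 0) hs.mul_sub_mem using 1; ring)
  exact iff_not_self ((ZMod.iff_neg_one_of_iff_add_one hedge).symm.trans hswap)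

end IsPolygon

theorem not_hasPolygon_of_adicallyClosed {m : ℕ} (hR : AdicallyClosed (2 * m) R) :
    ¬HasPolygon R := by
  rintro ⟨n, hn, P, Q, hP, hQ, hPQ⟩
  have h : IsPolygon P Q := ⟨hP, hQ, hPQ⟩
  have := h.nontrivial
  have : NeZero n := ⟨by omega⟩
  obtain ⟨b, c, a, hs⟩ := h.exists_swapsRoots hn
  obtain ⟨r, hr⟩ := hR.exists_isNilpotent_quadratic (b + c) a
  exact h.not_isNilpotent hs r hr

/-- A quadratically closed ring has no polygons; more generally, for every `m ≥ 1`, a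
`2m`-adically closed ring has no polygons. -/
theorem no_polygons :
    (∀ (R : Type u) [CommRing R], QuadraticallyClosed R → ¬ HasPolygon R) ∧
      (∀ m : ℕ, 1 ≤ m → ∀ (R : Type u) [CommRing R],
        AdicallyClosed (2 * m) R → ¬ HasPolygon R) :=
  ⟨fun _ _ hR => not_hasPolygon_of_adicallyClosed (m := 1) hR,
    fun _ _ _ _ hR => not_hasPolygon_of_adicallyClosed hR⟩
end
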